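/- arXiv:math/0408029 — 4 statements merged into one kernel-verified Lean document; each statement's English description precedes it below -/
import Mathlib

section
/- For octonions α, β, γ, the trace satisfies Tr(α·(β·γ)) = Tr((α·β)·γ); in other words, the trilinear form Tr(αβγ) is well defined despite non-associativity of octonion multiplication. -/
noncomputable section

/-- Octonion multiplication (Cayley–Dickson double of the quaternions). -/
def cdMul (x y : Quaternion ℝ × Quaternion ℝ) : Quaternion ℝ × Quaternion ℝ :=
  (x.1 * y.1 - star y.2 * x.2, y.2 * x.1 + x.2 * star y.1)

/-- Octonion conjugation. -/
def cdConj (x : Quaternion ℝ × Quaternion ℝ) : Quaternion ℝ × Quaternion ℝ :=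
  (star x.1, -x.2)

/-- Octonion trace `Tr(x) = x + x̄`. -/
def cdTr (x : Quaternion ℝ × Quaternion ℝ) : Quaternion ℝ × Quaternion ℝ :=
  x + cdConj x

set_option maxHeartbeats 1000000 in
/-- For octonions `α, β, γ` one has `Tr(α·(β·γ)) = Tr((α·β)·γ)`:
the trilinear form `Tr(αβγ)` is well defined despite non-associativity. -/
theorem cd_trace_assoc (α β γ : Quaternion ℝ × Quaternion ℝ) :
    cdTr (cdMul α (cdMul β γ)) = cdTr (cdMul (cdMul α β) γ) := by
  simp only [cdTr, cdConj, cdMul, Prod.mk_add_mk, Prod.mk.injEq]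
  refine ⟨?_, by rw [add_neg_cancel, add_neg_cancel]⟩
  rw [Quaternion.self_add_star', Quaternion.self_add_star']
  congr 1
  simp only [Quaternion.re_sub, Quaternion.re_mul, Quaternion.re_star, Quaternion.imI_star,
    Quaternion.imJ_star, Quaternion.imK_star, Quaternion.re_add, Quaternion.imI_add,
    Quaternion.imJ_add, Quaternion.imK_add, Quaternion.imI_sub, Quaternion.imJ_sub,
    Quaternion.imK_sub, Quaternion.imI_mul, Quaternion.imJ_mul, Quaternion.imK_mul]
  ring
end
end

section
/- For a 2×2×2 cube c = (c_{i,j,k}) with entries in a commutative ring, the three binary quadratic forms Q_i(x,y) = −det(F_i x − F_i' y), where F_i and F_i' are the two opposite faces of c in the i-th direction viewed as 2×2 matrices, all have the same discriminant. -/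
/-! Each of the three discriminants is Cayley's hyperdeterminant of the cube. For the first
direction this is a polynomial identity; the faces in the second and third directions are the
first-direction faces of the cube with its axes permuted, and the hyperdeterminant is invariant
under permuting the axes. -/

noncomputable section

variable {R : Type*} [CommRing R]

/-- The face of a 2×2×2 cube containing `c 0 0 0` in the first direction. -/
def face1 (c : Fin 2 → Fin 2 → Fin 2 → R) : Matrix (Fin 2) (Fin 2) R :=
  Matrix.of fun j k => c 0 j k

/-- The opposite face in the first direction. -/
def face1' (c : Fin 2 → Fin 2 → Fin 2 → R) : Matrix (Fin 2) (Fin 2) R :=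
  Matrix.of fun j k => c 1 j k

/-- The face containing `c 0 0 0` in the second direction. -/
def face2 (c : Fin 2 → Fin 2 → Fin 2 → R) : Matrix (Fin 2) (Fin 2) R :=
  Matrix.of fun i k => c i 0 k

/-- The opposite face in the second direction. -/
def face2' (c : Fin 2 → Fin 2 → Fin 2 → R) : Matrix (Fin 2) (Fin 2) R :=
  Matrix.of fun i k => c i 1 k

/-- The face containing `c 0 0 0` in the third direction. -/
def face3 (c : Fin 2 → Fin 2 → Fin 2 → R) : Matrix (Fin 2) (Fin 2) R :=
  Matrix.of fun i j => c i j 0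

/-- The opposite face in the third direction. -/
def face3' (c : Fin 2 → Fin 2 → Fin 2 → R) : Matrix (Fin 2) (Fin 2) R :=
  Matrix.of fun i j => c i j 1

/-- The binary quadratic form `Q(x,y) = −det(F x − F' y)` of a pair of opposite faces. -/
def cubeQ (F F' : Matrix (Fin 2) (Fin 2) R) (x y : R) : R :=
  -(x • F - y • F').det

/-- The discriminant `b² − 4ac` of the binary quadratic form `Q(x,y) = ax² + bxy + cy²`
attached to a pair of opposite faces. -/
def cubeDisc (F F' : Matrix (Fin 2) (Fin 2) R) : R :=
  (cubeQ F F' 1 1 - cubeQ F F' 1 0 - cubeQ F F' 0 1) ^ 2 -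
    4 * cubeQ F F' 1 0 * cubeQ F F' 0 1

/-- Cayley's hyperdeterminant of a 2×2×2 cube. -/
def hyperdet (c : Fin 2 → Fin 2 → Fin 2 → R) : R :=
  c 0 0 0 ^ 2 * c 1 1 1 ^ 2 + c 0 0 1 ^ 2 * c 1 1 0 ^ 2 + c 0 1 0 ^ 2 * c 1 0 1 ^ 2 +
      c 1 0 0 ^ 2 * c 0 1 1 ^ 2 -
    2 * (c 0 0 0 * c 0 0 1 * c 1 1 0 * c 1 1 1 + c 0 0 0 * c 0 1 0 * c 1 0 1 * c 1 1 1 +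
      c 0 0 0 * c 1 0 0 * c 0 1 1 * c 1 1 1 + c 0 0 1 * c 0 1 0 * c 1 0 1 * c 1 1 0 +
      c 0 0 1 * c 1 0 0 * c 0 1 1 * c 1 1 0 + c 0 1 0 * c 1 0 0 * c 0 1 1 * c 1 0 1) +
    4 * (c 0 0 0 * c 0 1 1 * c 1 0 1 * c 1 1 0 + c 0 0 1 * c 0 1 0 * c 1 0 0 * c 1 1 1)

def swapAxes12 {α : Type*} (c : Fin 2 → Fin 2 → Fin 2 → α) : Fin 2 → Fin 2 → Fin 2 → α :=
  fun i j k => c j i k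

def rotateAxes {α : Type*} (c : Fin 2 → Fin 2 → Fin 2 → α) : Fin 2 → Fin 2 → Fin 2 → α :=
  fun i j k => c j k i

section

variable {α : Type*} (c : Fin 2 → Fin 2 → Fin 2 → α)

theorem face1_swapAxes12 : face1 (swapAxes12 c) = face2 c := rfl

theorem face1'_swapAxes12 : face1' (swapAxes12 c) = face2' c := rfl

theorem face1_rotateAxes : face1 (rotateAxes c) = face3 c := rfl

theorem face1'_rotateAxes : face1' (rotateAxes c) = face3' c := rfl

end

section

variable (c : Fin 2 → Fin 2 → Fin 2 → R)

theorem cubeDisc_face1 : cubeDisc (face1 c) (face1' c) = hyperdet c := by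
  simp only [cubeDisc, cubeQ, face1, face1', hyperdet, Matrix.det_fin_two, Matrix.sub_apply,
    Matrix.smul_apply, Matrix.of_apply, smul_eq_mul]
  ring

theorem hyperdet_swapAxes12 : hyperdet (swapAxes12 c) = hyperdet c := by
  simp only [hyperdet, swapAxes12]
  ring

theorem hyperdet_rotateAxes : hyperdet (rotateAxes c) = hyperdet c := by
  simp only [hyperdet, rotateAxes]
  ring

theorem cubeDisc_face2 : cubeDisc (face2 c) (face2' c) = hyperdet c := by
  rw [← face1_swapAxes12, ← face1'_swapAxes12, cubeDisc_face1, hyperdet_swapAxes12]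

theorem cubeDisc_face3 : cubeDisc (face3 c) (face3' c) = hyperdet c := by
  rw [← face1_rotateAxes, ← face1'_rotateAxes, cubeDisc_face1, hyperdet_rotateAxes]

end

/-- The three binary quadratic forms `Q_i(x,y) = −det(F_i x − F_i' y)` obtained from the
three pairs of opposite faces of a 2×2×2 cube all have the same discriminant. -/
theorem cube_disc_eq (c : Fin 2 → Fin 2 → Fin 2 → R) :
    cubeDisc (face1 c) (face1' c) = cubeDisc (face2 c) (face2' c) ∧
    cubeDisc (face2 c) (face2' c) = cubeDisc (face3 c) (face3' c) := by
  rw [cubeDisc_face1, cubeDisc_face2, cubeDisc_face3]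
  exact ⟨rfl, rfl⟩
end
end

section
/- The group of integer points SL₂(ℤ)³ acting on 2×2×2 integer cubes via the tensor cube of the standard representation preserves the discriminant Δ of a cube. -/
noncomputable section

variable {R : Type*} [CommRing R]

/-- The action of a triple of 2×2 integer matrices on 2×2×2 integer cubes via the tensor
cube of the standard representation. -/
def cubeAct (g₁ g₂ g₃ : Matrix (Fin 2) (Fin 2) ℤ) (c : Fin 2 → Fin 2 → Fin 2 → ℤ) :
    Fin 2 → Fin 2 → Fin 2 → ℤ :=
  fun i j k => ∑ i', ∑ j', ∑ k', g₁ i i' * g₂ j j' * g₃ k k' * c i' j' k'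

/-
The two faces of `(g₁, g₂, g₃) • c` in the first direction are the combinations of
`face1 c` and `face1' c` given by the rows of `g₁`, multiplied by `g₂` on the left and `g₃ᵀ` on
the right. The outer multiplication scales the quadratic form by `det g₂ * det g₃`, the
combination substitutes its variables linearly with determinant `det g₁`, and the discriminant
picks up the square of each factor.
-/

open scoped Matrix

theorem cubeQ_mul_mul (P T A B : Matrix (Fin 2) (Fin 2) R) (x y : R) :
    cubeQ (P * A * T) (P * B * T) x y = P.det * T.det * cubeQ A B x y := by
  have h : x • (P * A * T) - y • (P * B * T) = P * (x • A - y • B) * T := by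
    simp only [Matrix.mul_smul, Matrix.smul_mul, Matrix.mul_sub, Matrix.sub_mul]
  rw [cubeQ, h, Matrix.det_mul, Matrix.det_mul, cubeQ]
  ring

theorem cubeDisc_mul_mul (P T A B : Matrix (Fin 2) (Fin 2) R) :
    cubeDisc (P * A * T) (P * B * T) = (P.det * T.det) ^ 2 * cubeDisc A B := by
  simp only [cubeDisc, cubeQ_mul_mul]
  ring

theorem cubeDisc_smul_add_smul (A B : Matrix (Fin 2) (Fin 2) R) (a b c d : R) :
    cubeDisc (a • A + b • B) (c • A + d • B) = (a * d - b * c) ^ 2 * cubeDisc A B := by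
  simp only [cubeDisc, cubeQ, Matrix.det_fin_two, Matrix.sub_apply, Matrix.add_apply,
    Matrix.smul_apply, smul_eq_mul]
  ring

theorem face1_cubeAct (g₁ g₂ g₃ : Matrix (Fin 2) (Fin 2) ℤ) (c : Fin 2 → Fin 2 → Fin 2 → ℤ) :
    face1 (cubeAct g₁ g₂ g₃ c) = g₂ * (g₁ 0 0 • face1 c + g₁ 0 1 • face1' c) * g₃ᵀ := by
  ext j k
  simp only [face1, face1', cubeAct, Matrix.of_apply, Matrix.mul_apply, Matrix.add_apply,
    Matrix.smul_apply, Matrix.transpose_apply, smul_eq_mul, Fin.sum_univ_two]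
  ring

theorem face1'_cubeAct (g₁ g₂ g₃ : Matrix (Fin 2) (Fin 2) ℤ) (c : Fin 2 → Fin 2 → Fin 2 → ℤ) :
    face1' (cubeAct g₁ g₂ g₃ c) = g₂ * (g₁ 1 0 • face1 c + g₁ 1 1 • face1' c) * g₃ᵀ := by
  ext j k
  simp only [face1, face1', cubeAct, Matrix.of_apply, Matrix.mul_apply, Matrix.add_apply,
    Matrix.smul_apply, Matrix.transpose_apply, smul_eq_mul, Fin.sum_univ_two]
  ring

/-- `SL₂(ℤ)³`, acting on 2×2×2 integer cubes via the tensor cube of the standard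
representation, preserves the discriminant of a cube. -/
theorem cube_disc_SL2_invariant (g₁ g₂ g₃ : Matrix.SpecialLinearGroup (Fin 2) ℤ)
    (c : Fin 2 → Fin 2 → Fin 2 → ℤ) :
    cubeDisc (face1 (cubeAct (g₁ : Matrix (Fin 2) (Fin 2) ℤ) g₂ g₃ c))
        (face1' (cubeAct (g₁ : Matrix (Fin 2) (Fin 2) ℤ) g₂ g₃ c)) =
      cubeDisc (face1 c) (face1' c) := by
  rw [face1_cubeAct, face1'_cubeAct, cubeDisc_mul_mul, cubeDisc_smul_add_smul,
    Matrix.det_transpose, ← Matrix.det_fin_two]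
  simp only [Matrix.SpecialLinearGroup.det_coe]
  ring
end
end

section
/- The norm on an octonion algebra is multiplicative: N(x·y) = N(x)·N(y) for all octonions x, y. -/
noncomputable section

/-- The octonion norm, valued in the base ring: `N(u,v) = N(u) + N(v)`, where the
quaternion norm `N(u) = u·ū` is identified with the scalar `normSq u`. -/
def cdNorm (x : Quaternion ℝ × Quaternion ℝ) : ℝ :=
  Quaternion.normSq x.1 + Quaternion.normSq x.2

/-- The octonion norm is multiplicative: `N(x·y) = N(x)·N(y)`. -/
theorem cd_norm_mul (x y : Quaternion ℝ × Quaternion ℝ) :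
    cdNorm (cdMul x y) = cdNorm x * cdNorm y := by
  simp only [cdNorm, cdMul, Quaternion.normSq_def', Quaternion.re_mul, Quaternion.imI_mul,
    Quaternion.imJ_mul, Quaternion.imK_mul, Quaternion.re_sub, Quaternion.imI_sub,
    Quaternion.imJ_sub, Quaternion.imK_sub, Quaternion.re_add, Quaternion.imI_add,
    Quaternion.imJ_add, Quaternion.imK_add, Quaternion.re_star, Quaternion.imI_star,
    Quaternion.imJ_star, Quaternion.imK_star]
  ring
end
end
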